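/- arXiv:1712.05887 — 5 statements merged into one kernel-verified Lean document; each statement's English description precedes it below -/
import Mathlib

section
/- For every u ∈ V and v ∈ H, the series Σ_{n≥1} (B(u,v))_n v_n converges absolutely and ⟨B(u,v), v⟩_H = Σ_{n≥1} (B(u,v))_n v_n = 0. -/
/-- The dyadic wave numbers `k_n = k₀ · 2ⁿ`. -/
noncomputable def kseq (k0 : ℝ) (n : ℕ) : ℝ := k0 * 2 ^ n

/-- The bilinear operator of the dyadic shell model,
`(B(u,v))_n = k_{n-1} u_{n-1} v_{n-1} − k_n u_n v_{n+1}` (natural subtraction;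
sequences satisfy the convention `u 0 = 0`). -/
noncomputable def Bop (k0 : ℝ) (u v : ℕ → ℝ) (n : ℕ) : ℝ :=
  kseq k0 (n - 1) * u (n - 1) * v (n - 1) - kseq k0 n * u n * v (n + 1)

set_option maxHeartbeats 1600000

/-- For every `u ∈ V` and `v ∈ H`, the series `Σ_{n≥1} (B(u,v))_n v_n` converges
absolutely and `⟨B(u,v), v⟩_H = Σ_{n≥1} (B(u,v))_n v_n = 0`. -/
theorem stmt0 (k0 : ℝ) (hk0 : 0 < k0) (u v : ℕ → ℝ) (hu0 : u 0 = 0) (hv0 : v 0 = 0)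
    (hu : Summable (fun n : ℕ => (kseq k0 (n + 1)) ^ 2 * (u (n + 1)) ^ 2))
    (hv : Summable (fun n : ℕ => (v (n + 1)) ^ 2)) :
    Summable (fun n : ℕ => |Bop k0 u v (n + 1) * v (n + 1)|) ∧
      (∑' n : ℕ, Bop k0 u v (n + 1) * v (n + 1)) = 0 := by
  set c : ℕ → ℝ := fun n => kseq k0 n * u n * v n * v (n + 1) with hc
  have hterm : ∀ n : ℕ, Bop k0 u v (n + 1) * v (n + 1) = c n - c (n + 1) := by
    intro n
    simp only [hc, Bop, Nat.add_sub_cancel]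
    ring
  -- bound on v
  set S : ℝ := ∑' n : ℕ, (v (n + 1)) ^ 2 with hS
  have hSb : ∀ n : ℕ, (v (n + 1)) ^ 2 ≤ S := fun n =>
    Summable.le_tsum hv n (fun i _ => sq_nonneg _)
  have hv' : Summable (fun n : ℕ => (v (n + 1 + 1)) ^ 2) :=
    (summable_nat_add_iff 1).2 hv
  -- summability of |c|
  have hmaj : Summable (fun n : ℕ =>
      (S * ((kseq k0 (n + 1)) ^ 2 * (u (n + 1)) ^ 2) + (v (n + 1 + 1)) ^ 2) / 2) :=
    ((hu.mul_left S).add hv').div_const 2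
  have hcabs1 : Summable (fun n : ℕ => |c (n + 1)|) := by
    apply Summable.of_nonneg_of_le (fun n => abs_nonneg _) _ hmaj
    intro n
    have h1 : (v (n + 1)) ^ 2 ≤ S := hSb n
    have h2 : |c (n + 1)| = |kseq k0 (n + 1) * u (n + 1) * v (n + 1)| * |v (n + 1 + 1)| := by
      rw [hc]; rw [abs_mul]
    nlinarith [sq_nonneg (|kseq k0 (n + 1) * u (n + 1) * v (n + 1)| - |v (n + 1 + 1)|),
      sq_abs (kseq k0 (n + 1) * u (n + 1) * v (n + 1)), sq_abs (v (n + 1 + 1)),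
      abs_nonneg (kseq k0 (n + 1) * u (n + 1) * v (n + 1)), abs_nonneg (v (n + 1 + 1)),
      sq_nonneg (kseq k0 (n + 1) * u (n + 1)), sq_nonneg (v (n + 1))]
  have hcabs : Summable (fun n : ℕ => |c n|) := (summable_nat_add_iff 1).1 hcabs1
  have hcsum : Summable c := hcabs.of_abs
  have hcsucc : Summable (fun n : ℕ => c (n + 1)) := (summable_nat_add_iff 1).2 hcsum
  constructor
  · have heq : (fun n : ℕ => |Bop k0 u v (n + 1) * v (n + 1)|)
        = fun n : ℕ => |c n - c (n + 1)| := funext fun n => by rw [hterm n]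
    rw [heq]
    exact Summable.of_nonneg_of_le (fun n => abs_nonneg _) (fun n => abs_sub _ _)
      (hcabs.add ((summable_nat_add_iff 1).2 hcabs))
  · have h0 : c 0 = 0 := by simp [hc, hu0]
    calc (∑' n : ℕ, Bop k0 u v (n + 1) * v (n + 1))
        = ∑' n : ℕ, (c n - c (n + 1)) := by
          exact tsum_congr hterm
      _ = (∑' n : ℕ, c n) - ∑' n : ℕ, c (n + 1) := Summable.tsum_sub hcsum hcsucc
      _ = (c 0 + ∑' n : ℕ, c (n + 1)) - ∑' n : ℕ, c (n + 1) := by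
          rw [Summable.tsum_eq_zero_add hcsum]
      _ = 0 := by rw [h0]; ring
end

section
/- For every d, s ∈ ℝ there exists a constant C > 0, depending only on d and s (one may take C² = max{2^{4d+2}, (1/2)^{2+4s}} times an absolute factor), such that for all u ∈ V_{2d−2s} and v ∈ V_{1+2s}, the sequence B(u,v) belongs to V_{2d} and |B(u,v)|_{V_{2d}} ≤ C |u|_{V_{2d−2s}} |v|_{V_{1+2s}}. -/
lemma kseq_pos {k0 : ℝ} (hk0 : 0 < k0) (n : ℕ) : 0 < kseq k0 n := by
  unfold kseq; positivity

lemma kseq_succ (k0 : ℝ) (n : ℕ) : kseq k0 (n + 1) = 2 * kseq k0 n := by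
  unfold kseq; ring

lemma sq_sub_le (a b : ℝ) : (a - b) ^ 2 ≤ 2 * a ^ 2 + 2 * b ^ 2 := by
  nlinarith [sq_nonneg (a + b)]

/-- For every `d, s ∈ ℝ` there exists `C > 0` depending only on `d, s` such that
for all `u ∈ V_{2d−2s}` and `v ∈ V_{1+2s}` one has `B(u,v) ∈ V_{2d}` and
`|B(u,v)|_{V_{2d}} ≤ C |u|_{V_{2d−2s}} |v|_{V_{1+2s}}`.  Here membership in `V_s`
is expressed through summability of `Σ k_n^{2s} x_n²` and the norm through the
square root of that sum. -/
theorem stmt2 (k0 : ℝ) (hk0 : 0 < k0) (d s : ℝ) :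
    ∃ C : ℝ, 0 < C ∧ ∀ u v : ℕ → ℝ, u 0 = 0 → v 0 = 0 →
      Summable (fun n : ℕ => kseq k0 (n + 1) ^ (4 * d - 4 * s) * (u (n + 1)) ^ 2) →
      Summable (fun n : ℕ => kseq k0 (n + 1) ^ (2 + 4 * s) * (v (n + 1)) ^ 2) →
      Summable (fun n : ℕ => kseq k0 (n + 1) ^ (4 * d) * (Bop k0 u v (n + 1)) ^ 2) ∧
        Real.sqrt (∑' n : ℕ, kseq k0 (n + 1) ^ (4 * d) * (Bop k0 u v (n + 1)) ^ 2) ≤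
          C * Real.sqrt (∑' n : ℕ, kseq k0 (n + 1) ^ (4 * d - 4 * s) * (u (n + 1)) ^ 2) *
            Real.sqrt (∑' n : ℕ, kseq k0 (n + 1) ^ (2 + 4 * s) * (v (n + 1)) ^ 2) := by
  have h2 : (0:ℝ) < 2 := two_pos
  set c : ℝ := 2 ^ (4 * d + 1) + 2 ^ (-1 - 4 * s) with hc
  have hcpos : 0 < c := by positivity
  refine ⟨Real.sqrt c, Real.sqrt_pos.mpr hcpos, ?_⟩
  intro u v hu0 hv0 hu hv
  set Su := ∑' n : ℕ, kseq k0 (n + 1) ^ (4 * d - 4 * s) * (u (n + 1)) ^ 2 with hSu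
  set Sv := ∑' n : ℕ, kseq k0 (n + 1) ^ (2 + 4 * s) * (v (n + 1)) ^ 2 with hSv
  have hSunn : 0 ≤ Su := tsum_nonneg (fun n => by have := kseq_pos hk0 (n+1); positivity)
  have hSvnn : 0 ≤ Sv := tsum_nonneg (fun n => by have := kseq_pos hk0 (n+1); positivity)
  set g : ℕ → ℝ := fun n => kseq k0 n ^ (4 * d - 4 * s) * u n ^ 2 with hg
  have hg0 : g 0 = 0 := by simp [hg, hu0]
  have hgnn : ∀ n, 0 ≤ g n := fun n => by
    have := kseq_pos hk0 n; simp only [hg]; positivity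
  have hgsum : Summable g := (summable_nat_add_iff 1).mp hu
  have htg : ∑' n, g n = Su := by
    rw [Summable.tsum_eq_zero_add hgsum, hg0, zero_add]
  -- the key single-term bound for v
  have hvle : ∀ m : ℕ, kseq k0 (m + 1) ^ (2 + 4 * s) * v (m + 1) ^ 2 ≤ Sv := by
    intro m
    exact Summable.le_tsum hv m (fun j _ => by have := kseq_pos hk0 (j+1); positivity)
  -- bound for the first term
  have hA : ∀ n : ℕ, kseq k0 (n + 1) ^ (4 * d) * (kseq k0 n * u n * v n) ^ 2 ≤
      2 ^ (4 * d) * Sv * g n := by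
    intro n
    match n with
    | 0 =>
      have : 0 ≤ (2:ℝ) ^ (4 * d) * Sv * g 0 := by
        rw [hg0]; simp
      simpa [hu0] using this
    | m + 1 =>
      have ha : 0 < kseq k0 (m + 1) := kseq_pos hk0 (m + 1)
      set a := kseq k0 (m + 1) with hadef
      have hstep : kseq k0 (m + 2) = 2 * a := kseq_succ k0 (m + 1)
      have hmul : (2 * a) ^ (4 * d) = 2 ^ (4 * d) * a ^ (4 * d) :=
        Real.mul_rpow (by norm_num) ha.le
      have hsplit : a ^ (4 * d) * a ^ (2:ℕ) = a ^ (4 * d - 4 * s) * a ^ (2 + 4 * s) := by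
        rw [← Real.rpow_natCast a 2, ← Real.rpow_add ha, ← Real.rpow_add ha]
        congr 1
        push_cast
        ring
      have hgm : g (m + 1) = a ^ (4 * d - 4 * s) * u (m + 1) ^ 2 := rfl
      have hEq : kseq k0 (m + 2) ^ (4 * d) * (a * u (m + 1) * v (m + 1)) ^ 2 =
          2 ^ (4 * d) * g (m + 1) * (a ^ (2 + 4 * s) * v (m + 1) ^ 2) := by
        rw [hstep, hmul, hgm]
        linear_combination (2 ^ (4 * d) * u (m + 1) ^ 2 * v (m + 1) ^ 2) * hsplit
      rw [hEq]
      have h1 : 0 ≤ (2:ℝ) ^ (4 * d) * g (m + 1) := by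
        have := hgnn (m + 1); positivity
      calc 2 ^ (4 * d) * g (m + 1) * (a ^ (2 + 4 * s) * v (m + 1) ^ 2)
          ≤ 2 ^ (4 * d) * g (m + 1) * Sv := by
            exact mul_le_mul_of_nonneg_left (hvle m) h1
        _ = 2 ^ (4 * d) * Sv * g (m + 1) := by ring
  -- bound for the second term
  have hB : ∀ n : ℕ, kseq k0 (n + 1) ^ (4 * d) *
      (kseq k0 (n + 1) * u (n + 1) * v (n + 2)) ^ 2 ≤ 2 ^ (-2 - 4 * s) * Sv * g (n + 1) := by
    intro n
    have ha : 0 < kseq k0 (n + 1) := kseq_pos hk0 (n + 1)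
    set a := kseq k0 (n + 1) with hadef
    have hstep : kseq k0 (n + 2) = 2 * a := kseq_succ k0 (n + 1)
    have hmul : (2 * a) ^ (2 + 4 * s) = 2 ^ (2 + 4 * s) * a ^ (2 + 4 * s) :=
      Real.mul_rpow (by norm_num) ha.le
    have hpow2 : (2:ℝ) ^ (-2 - 4 * s) * 2 ^ (2 + 4 * s) = 1 := by
      rw [← Real.rpow_add h2]
      norm_num
    have hsplit : a ^ (4 * d) * a ^ (2:ℕ) = a ^ (4 * d - 4 * s) * a ^ (2 + 4 * s) := by
      rw [← Real.rpow_natCast a 2, ← Real.rpow_add ha, ← Real.rpow_add ha]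
      congr 1
      push_cast
      ring
    have ha2 : a ^ (2 + 4 * s) = 2 ^ (-2 - 4 * s) * kseq k0 (n + 2) ^ (2 + 4 * s) := by
      rw [hstep, hmul, ← mul_assoc, hpow2, one_mul]
    have hgn : g (n + 1) = a ^ (4 * d - 4 * s) * u (n + 1) ^ 2 := rfl
    have hEq : a ^ (4 * d) * (a * u (n + 1) * v (n + 2)) ^ 2 =
        2 ^ (-2 - 4 * s) * g (n + 1) *
          (kseq k0 (n + 2) ^ (2 + 4 * s) * v (n + 2) ^ 2) := by
      have hx : (a * u (n + 1) * v (n + 2)) ^ 2 = a ^ (2:ℕ) * u (n+1) ^ 2 * v (n+2) ^ 2 := by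
        ring
      rw [hx, hgn]
      calc a ^ (4 * d) * (a ^ (2:ℕ) * u (n+1) ^ 2 * v (n+2) ^ 2)
          = (a ^ (4 * d) * a ^ (2:ℕ)) * u (n+1) ^ 2 * v (n+2) ^ 2 := by ring
        _ = (a ^ (4 * d - 4 * s) * a ^ (2 + 4 * s)) * u (n+1) ^ 2 * v (n+2) ^ 2 := by
            rw [hsplit]
        _ = (a ^ (4 * d - 4 * s) *
              (2 ^ (-2 - 4 * s) * kseq k0 (n + 2) ^ (2 + 4 * s))) * u (n+1) ^ 2 * v (n+2) ^ 2 := by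
            rw [← ha2]
        _ = 2 ^ (-2 - 4 * s) * (a ^ (4 * d - 4 * s) * u (n + 1) ^ 2) *
              (kseq k0 (n + 2) ^ (2 + 4 * s) * v (n + 2) ^ 2) := by ring
    rw [hEq]
    have h1 : 0 ≤ (2:ℝ) ^ (-2 - 4 * s) * g (n + 1) := by
      have := hgnn (n + 1); positivity
    calc 2 ^ (-2 - 4 * s) * g (n + 1) * (kseq k0 (n + 2) ^ (2 + 4 * s) * v (n + 2) ^ 2)
        ≤ 2 ^ (-2 - 4 * s) * g (n + 1) * Sv :=
          mul_le_mul_of_nonneg_left (hvle (n + 1)) h1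
      _ = 2 ^ (-2 - 4 * s) * Sv * g (n + 1) := by ring
  -- pointwise bound
  set F : ℕ → ℝ := fun n => 2 * (2 ^ (4 * d) * Sv * g n) + 2 * (2 ^ (-2 - 4 * s) * Sv * g (n + 1))
    with hF
  have hbd : ∀ n : ℕ, kseq k0 (n + 1) ^ (4 * d) * (Bop k0 u v (n + 1)) ^ 2 ≤ F n := by
    intro n
    have hBop : Bop k0 u v (n + 1) =
        kseq k0 n * u n * v n - kseq k0 (n + 1) * u (n + 1) * v (n + 2) := by
      simp [Bop]
    have hK : 0 ≤ kseq k0 (n + 1) ^ (4 * d) := (Real.rpow_pos_of_pos (kseq_pos hk0 _) _).le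
    calc kseq k0 (n + 1) ^ (4 * d) * (Bop k0 u v (n + 1)) ^ 2
        ≤ kseq k0 (n + 1) ^ (4 * d) *
            (2 * (kseq k0 n * u n * v n) ^ 2 +
              2 * (kseq k0 (n + 1) * u (n + 1) * v (n + 2)) ^ 2) := by
          rw [hBop]
          exact mul_le_mul_of_nonneg_left (sq_sub_le _ _) hK
      _ = 2 * (kseq k0 (n + 1) ^ (4 * d) * (kseq k0 n * u n * v n) ^ 2) +
            2 * (kseq k0 (n + 1) ^ (4 * d) *
              (kseq k0 (n + 1) * u (n + 1) * v (n + 2)) ^ 2) := by ring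
      _ ≤ F n := by
          simp only [hF]
          linarith [hA n, hB n]
  have hFsum : Summable F := by
    apply Summable.add
    · exact (hgsum.mul_left _).mul_left 2
    · exact ((((summable_nat_add_iff 1).mpr hgsum)).mul_left _).mul_left 2
  have hfnn : ∀ n : ℕ, 0 ≤ kseq k0 (n + 1) ^ (4 * d) * (Bop k0 u v (n + 1)) ^ 2 := by
    intro n
    have := kseq_pos hk0 (n + 1); positivity
  have hfsum : Summable (fun n : ℕ => kseq k0 (n + 1) ^ (4 * d) * (Bop k0 u v (n + 1)) ^ 2) :=
    Summable.of_nonneg_of_le hfnn hbd hFsum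
  refine ⟨hfsum, ?_⟩
  have htF : ∑' n, F n = c * Su * Sv := by
    rw [hF, Summable.tsum_add ((hgsum.mul_left _).mul_left 2)
      (((((summable_nat_add_iff 1).mpr hgsum)).mul_left _).mul_left 2)]
    rw [tsum_mul_left, tsum_mul_left, tsum_mul_left, tsum_mul_left, htg]
    have h1 : ∑' n, g (n + 1) = Su := by rw [← htg, Summable.tsum_eq_zero_add hgsum, hg0, zero_add]
    rw [h1]
    have e1 : (2:ℝ) * 2 ^ (4 * d) = 2 ^ (4 * d + 1) := by
      rw [Real.rpow_add h2, Real.rpow_one]; ring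
    have e2 : (2:ℝ) * 2 ^ (-2 - 4 * s) = 2 ^ (-1 - 4 * s) := by
      rw [show (-1 - 4 * s : ℝ) = (-2 - 4 * s) + 1 by ring, Real.rpow_add h2,
        Real.rpow_one]
      ring
    rw [hc]; linear_combination (Sv * Su) * e1 + (Sv * Su) * e2
  have htle : ∑' n : ℕ, kseq k0 (n + 1) ^ (4 * d) * (Bop k0 u v (n + 1)) ^ 2 ≤ c * Su * Sv := by
    rw [← htF]; exact Summable.tsum_le_tsum hbd hfsum hFsum
  calc Real.sqrt (∑' n : ℕ, kseq k0 (n + 1) ^ (4 * d) * (Bop k0 u v (n + 1)) ^ 2)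
      ≤ Real.sqrt (c * Su * Sv) := Real.sqrt_le_sqrt htle
    _ = Real.sqrt c * Real.sqrt Su * Real.sqrt Sv := by
        rw [Real.sqrt_mul (by positivity), Real.sqrt_mul hcpos.le]
end

section
/- There exists a constant C > 0 such that: (1) |B(u,v)|_H ≤ C |u|_V |v|_H for all u ∈ V, v ∈ H; (2) |B(u,v)|_H ≤ C |u|_H |v|_V for all u ∈ H, v ∈ V; (3) |B(u,v)|_{V'} ≤ C |u|_H |v|_H for all u, v ∈ H (in each case B(u,v) belongs to the indicated space). -/
lemma sum_sq_mul (a b : ℕ → ℝ) (ha : Summable fun n => (a n)^2) (hb : Summable fun n => (b n)^2) :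
    Summable (fun n => (a n * b n)^2) ∧
      ∑' n, (a n * b n)^2 ≤ (∑' n, (a n)^2) * (∑' n, (b n)^2) := by
  have hble : ∀ n, (b n)^2 ≤ ∑' m, (b m)^2 := fun n => Summable.le_tsum hb n (fun m _ => sq_nonneg _)
  have hle : ∀ n, (a n * b n)^2 ≤ (a n)^2 * ∑' m, (b m)^2 := by
    intro n; rw [mul_pow]; exact mul_le_mul_of_nonneg_left (hble n) (sq_nonneg _)
  have hs : Summable (fun n => (a n)^2 * ∑' m, (b m)^2) := ha.mul_right _
  have hsum : Summable (fun n => (a n * b n)^2) :=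
    Summable.of_nonneg_of_le (fun n => sq_nonneg _) hle hs
  refine ⟨hsum, ?_⟩
  calc ∑' n, (a n * b n)^2 ≤ ∑' n, (a n)^2 * ∑' m, (b m)^2 := Summable.tsum_le_tsum hle hsum hs
    _ = (∑' n, (a n)^2) * (∑' n, (b n)^2) := tsum_mul_right

lemma master (f a1 b1 a2 b2 : ℕ → ℝ) (A B : ℝ) (hA : 0 ≤ A) (hB : 0 ≤ B)
    (hf : ∀ n, f n = a1 n * b1 n - a2 n * b2 n)
    (ha1 : Summable fun n => (a1 n)^2) (hb1 : Summable fun n => (b1 n)^2)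
    (ha2 : Summable fun n => (a2 n)^2) (hb2 : Summable fun n => (b2 n)^2)
    (hta1 : ∑' n, (a1 n)^2 ≤ A^2) (htb1 : ∑' n, (b1 n)^2 ≤ B^2)
    (hta2 : ∑' n, (a2 n)^2 ≤ A^2) (htb2 : ∑' n, (b2 n)^2 ≤ B^2) :
    Summable (fun n => (f n)^2) ∧ Real.sqrt (∑' n, (f n)^2) ≤ 3 * A * B := by
  obtain ⟨hs1, ht1⟩ := sum_sq_mul a1 b1 ha1 hb1
  obtain ⟨hs2, ht2⟩ := sum_sq_mul a2 b2 ha2 hb2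
  have hfle : ∀ n, (f n)^2 ≤ 2*(a1 n * b1 n)^2 + 2*(a2 n * b2 n)^2 := by
    intro n; rw [hf n]; nlinarith [sq_nonneg (a1 n * b1 n + a2 n * b2 n)]
  have hsc : Summable (fun n => 2*(a1 n * b1 n)^2 + 2*(a2 n * b2 n)^2) :=
    (hs1.mul_left 2).add (hs2.mul_left 2)
  have hsum : Summable (fun n => (f n)^2) :=
    Summable.of_nonneg_of_le (fun n => sq_nonneg _) hfle hsc
  refine ⟨hsum, ?_⟩
  have p1 : ∑' n, (a1 n * b1 n)^2 ≤ A^2 * B^2 := by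
    refine ht1.trans (mul_le_mul hta1 htb1 (tsum_nonneg fun n => sq_nonneg _) ?_)
    exact (tsum_nonneg fun n => sq_nonneg _).trans hta1
  have p2 : ∑' n, (a2 n * b2 n)^2 ≤ A^2 * B^2 := by
    refine ht2.trans (mul_le_mul hta2 htb2 (tsum_nonneg fun n => sq_nonneg _) ?_)
    exact (tsum_nonneg fun n => sq_nonneg _).trans hta2
  have h1 : ∑' n, (f n)^2 ≤ (3*A*B)^2 := by
    have h2 := Summable.tsum_le_tsum hfle hsum hsc
    rw [Summable.tsum_add (hs1.mul_left 2) (hs2.mul_left 2), tsum_mul_left, tsum_mul_left] at h2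
    nlinarith [sq_nonneg (A*B), mul_nonneg hA hB]
  calc Real.sqrt (∑' n, (f n)^2) ≤ Real.sqrt ((3*A*B)^2) := Real.sqrt_le_sqrt h1
    _ = 3*A*B := Real.sqrt_sq (by positivity)

lemma shift_tsum (g : ℕ → ℝ) (h0 : g 0 = 0) (hg : Summable fun n => g (n+1)) :
    Summable g ∧ ∑' n, g n = ∑' n, g (n+1) := by
  have hs : Summable g := (summable_nat_add_iff 1).mp hg
  exact ⟨hs, by rw [Summable.tsum_eq_zero_add hs, h0, zero_add]⟩

lemma tail_le (g : ℕ → ℝ) (hnn : ∀ n, 0 ≤ g n) (hg : Summable g) :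
    Summable (fun n => g (n+1)) ∧ ∑' n, g (n+1) ≤ ∑' n, g n := by
  have hs : Summable fun n => g (n+1) := (summable_nat_add_iff 1).mpr hg
  refine ⟨hs, ?_⟩
  rw [Summable.tsum_eq_zero_add hg]
  linarith [hnn 0]

/-- There is a constant `C > 0` such that
(1) `|B(u,v)|_H ≤ C |u|_V |v|_H` for `u ∈ V`, `v ∈ H`;
(2) `|B(u,v)|_H ≤ C |u|_H |v|_V` for `u ∈ H`, `v ∈ V`;
(3) `|B(u,v)|_{V'} ≤ C |u|_H |v|_H` for `u, v ∈ H`;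
in each case `B(u,v)` belongs to the indicated space. -/
theorem stmt3 (k0 : ℝ) (hk0 : 0 < k0) :
    ∃ C : ℝ, 0 < C ∧
      ((∀ u v : ℕ → ℝ, u 0 = 0 → v 0 = 0 →
        Summable (fun n : ℕ => (kseq k0 (n + 1)) ^ 2 * (u (n + 1)) ^ 2) →
        Summable (fun n : ℕ => (v (n + 1)) ^ 2) →
        Summable (fun n : ℕ => (Bop k0 u v (n + 1)) ^ 2) ∧
          Real.sqrt (∑' n : ℕ, (Bop k0 u v (n + 1)) ^ 2) ≤
            C * Real.sqrt (∑' n : ℕ, (kseq k0 (n + 1)) ^ 2 * (u (n + 1)) ^ 2) *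
              Real.sqrt (∑' n : ℕ, (v (n + 1)) ^ 2)) ∧
      (∀ u v : ℕ → ℝ, u 0 = 0 → v 0 = 0 →
        Summable (fun n : ℕ => (u (n + 1)) ^ 2) →
        Summable (fun n : ℕ => (kseq k0 (n + 1)) ^ 2 * (v (n + 1)) ^ 2) →
        Summable (fun n : ℕ => (Bop k0 u v (n + 1)) ^ 2) ∧
          Real.sqrt (∑' n : ℕ, (Bop k0 u v (n + 1)) ^ 2) ≤
            C * Real.sqrt (∑' n : ℕ, (u (n + 1)) ^ 2) *
              Real.sqrt (∑' n : ℕ, (kseq k0 (n + 1)) ^ 2 * (v (n + 1)) ^ 2)) ∧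
      (∀ u v : ℕ → ℝ, u 0 = 0 → v 0 = 0 →
        Summable (fun n : ℕ => (u (n + 1)) ^ 2) →
        Summable (fun n : ℕ => (v (n + 1)) ^ 2) →
        Summable (fun n : ℕ => ((kseq k0 (n + 1)) ^ 2)⁻¹ * (Bop k0 u v (n + 1)) ^ 2) ∧
          Real.sqrt (∑' n : ℕ, ((kseq k0 (n + 1)) ^ 2)⁻¹ * (Bop k0 u v (n + 1)) ^ 2) ≤
            C * Real.sqrt (∑' n : ℕ, (u (n + 1)) ^ 2) *
              Real.sqrt (∑' n : ℕ, (v (n + 1)) ^ 2))) := by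
  have hk : ∀ n, 0 < kseq k0 n := by intro n; unfold kseq; positivity
  have hk2 : ∀ n, kseq k0 (n+1) = 2 * kseq k0 n := by
    intro n; unfold kseq; rw [pow_succ]; ring
  refine ⟨3, by norm_num, ?_, ?_, ?_⟩
  · -- part 1
    intro u v hu0 hv0 hU hV
    set A := Real.sqrt (∑' n : ℕ, (kseq k0 (n + 1)) ^ 2 * (u (n + 1)) ^ 2) with hAdef
    set B := Real.sqrt (∑' n : ℕ, (v (n + 1)) ^ 2) with hBdef
    have hA2 : A^2 = ∑' n : ℕ, (kseq k0 (n + 1)) ^ 2 * (u (n + 1)) ^ 2 :=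
      Real.sq_sqrt (tsum_nonneg fun n => by positivity)
    have hB2 : B^2 = ∑' n : ℕ, (v (n + 1)) ^ 2 :=
      Real.sq_sqrt (tsum_nonneg fun n => sq_nonneg _)
    -- a1
    have hU' : Summable (fun n => (kseq k0 (n+1) * u (n+1))^2) := by
      refine hU.congr fun n => ?_; rw [mul_pow]
    have ha1 := shift_tsum (fun n => (kseq k0 n * u n)^2) (by simp [hu0]) hU'
    have hb1 := shift_tsum (fun n => (v n)^2) (by simp [hv0]) hV
    have hb2 := tail_le (fun n => (v (n+1))^2) (fun n => sq_nonneg _) hV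
    have hta1 : ∑' n, (kseq k0 n * u n)^2 ≤ A^2 := by
      rw [hA2, ha1.2]; exact le_of_eq (tsum_congr fun n => by simp [mul_pow])
    obtain ⟨hsum, hbd⟩ := master (fun n => Bop k0 u v (n+1))
      (fun n => kseq k0 n * u n) (fun n => v n)
      (fun n => kseq k0 (n+1) * u (n+1)) (fun n => v (n+2))
      A B (Real.sqrt_nonneg _) (Real.sqrt_nonneg _)
      (fun n => by simp [Bop])
      ha1.1 hb1.1 hU' hb2.1
      hta1
      (by rw [hB2, hb1.2])
      (by rw [hA2]; exact le_of_eq (tsum_congr fun n => by simp [mul_pow]))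
      (by rw [hB2]; exact hb2.2)
    exact ⟨hsum, hbd⟩
  · -- part 2
    intro u v hu0 hv0 hU hV
    set A := Real.sqrt (∑' n : ℕ, (u (n + 1)) ^ 2) with hAdef
    set B := Real.sqrt (∑' n : ℕ, (kseq k0 (n + 1)) ^ 2 * (v (n + 1)) ^ 2) with hBdef
    have hA2 : A^2 = ∑' n : ℕ, (u (n + 1)) ^ 2 :=
      Real.sq_sqrt (tsum_nonneg fun n => sq_nonneg _)
    have hB2 : B^2 = ∑' n : ℕ, (kseq k0 (n + 1)) ^ 2 * (v (n + 1)) ^ 2 :=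
      Real.sq_sqrt (tsum_nonneg fun n => by positivity)
    have hV' : Summable (fun n => (kseq k0 (n+1) * v (n+1))^2) := by
      refine hV.congr fun n => ?_; rw [mul_pow]
    have ha1 := shift_tsum (fun n => (u n)^2) (by simp [hu0]) hU
    have hb1 := shift_tsum (fun n => (kseq k0 n * v n)^2) (by simp [hv0]) hV'
    have ha2 := tail_le (fun n => (u (n+1))^2) (fun n => sq_nonneg _) hU
    have hVt := tail_le (fun n => (kseq k0 (n+1) * v (n+1))^2) (fun n => sq_nonneg _) hV'
    -- b2 n = kseq (n+1) * v (n+2); compare to kseq (n+2) * v (n+2)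
    have hb2le : ∀ n, (kseq k0 (n+1) * v (n+2))^2 ≤ (kseq k0 (n+2) * v (n+2))^2 := by
      intro n
      have h1 : kseq k0 (n+2) = 2 * kseq k0 (n+1) := hk2 (n+1)
      rw [h1]
      nlinarith [sq_nonneg (kseq k0 (n+1) * v (n+2))]
    have hb2 : Summable (fun n => (kseq k0 (n+1) * v (n+2))^2) :=
      Summable.of_nonneg_of_le (fun n => sq_nonneg _) hb2le hVt.1
    have htb2 : ∑' n, (kseq k0 (n+1) * v (n+2))^2 ≤ B^2 := by
      rw [hB2]
      calc ∑' n, (kseq k0 (n+1) * v (n+2))^2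
          ≤ ∑' n, (kseq k0 (n+2) * v (n+2))^2 := Summable.tsum_le_tsum hb2le hb2 hVt.1
        _ ≤ ∑' n, (kseq k0 (n+1) * v (n+1))^2 := hVt.2
        _ = ∑' n, (kseq k0 (n+1))^2 * (v (n+1))^2 := tsum_congr fun n => by simp [mul_pow]
    obtain ⟨hsum, hbd⟩ := master (fun n => Bop k0 u v (n+1))
      (fun n => u n) (fun n => kseq k0 n * v n)
      (fun n => u (n+1)) (fun n => kseq k0 (n+1) * v (n+2))
      A B (Real.sqrt_nonneg _) (Real.sqrt_nonneg _)
      (fun n => by simp only [Bop, Nat.add_sub_cancel]; ring)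
      ha1.1 hb1.1 hU hb2
      (by rw [hA2, ha1.2])
      (by rw [hB2, hb1.2]; exact le_of_eq (tsum_congr fun n => by simp [mul_pow]))
      (by rw [hA2])
      htb2
    exact ⟨hsum, hbd⟩
  · -- part 3
    intro u v hu0 hv0 hU hV
    set A := Real.sqrt (∑' n : ℕ, (u (n + 1)) ^ 2) with hAdef
    set B := Real.sqrt (∑' n : ℕ, (v (n + 1)) ^ 2) with hBdef
    have hA2 : A^2 = ∑' n : ℕ, (u (n + 1)) ^ 2 :=
      Real.sq_sqrt (tsum_nonneg fun n => sq_nonneg _)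
    have hB2 : B^2 = ∑' n : ℕ, (v (n + 1)) ^ 2 :=
      Real.sq_sqrt (tsum_nonneg fun n => sq_nonneg _)
    have hfun : (fun n : ℕ => ((kseq k0 (n + 1)) ^ 2)⁻¹ * (Bop k0 u v (n + 1)) ^ 2)
        = fun n : ℕ => ((kseq k0 (n+1))⁻¹ * Bop k0 u v (n+1))^2 := by
      funext n; rw [mul_pow, inv_pow]
    have ha1 := shift_tsum (fun n => (u n)^2) (by simp [hu0]) hU
    have hb1' := shift_tsum (fun n => (v n)^2) (by simp [hv0]) hV
    have hb1le : ∀ n, ((1/2 : ℝ) * v n)^2 ≤ (v n)^2 := by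
      intro n; nlinarith [sq_nonneg (v n)]
    have hb1 : Summable (fun n => ((1/2 : ℝ) * v n)^2) :=
      Summable.of_nonneg_of_le (fun n => sq_nonneg _) hb1le hb1'.1
    have htb1 : ∑' n, ((1/2 : ℝ) * v n)^2 ≤ B^2 := by
      rw [hB2, ← hb1'.2]; exact Summable.tsum_le_tsum hb1le hb1 hb1'.1
    have hb2 := tail_le (fun n => (v (n+1))^2) (fun n => sq_nonneg _) hV
    have hf : ∀ n, (kseq k0 (n+1))⁻¹ * Bop k0 u v (n+1)
        = u n * ((1/2 : ℝ) * v n) - u (n+1) * v (n+2) := by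
      intro n
      have hne : kseq k0 (n+1) ≠ 0 := (hk (n+1)).ne'
      have hne0 : kseq k0 n ≠ 0 := (hk n).ne'
      simp only [Bop, Nat.add_sub_cancel]
      rw [hk2 n]
      field_simp
    obtain ⟨hsum, hbd⟩ := master (fun n => (kseq k0 (n+1))⁻¹ * Bop k0 u v (n+1))
      (fun n => u n) (fun n => (1/2 : ℝ) * v n)
      (fun n => u (n+1)) (fun n => v (n+2))
      A B (Real.sqrt_nonneg _) (Real.sqrt_nonneg _)
      hf ha1.1 hb1 hU hb2.1
      (by rw [hA2, ha1.2]) htb1 (by rw [hA2]) (by rw [hB2]; exact hb2.2)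
    rw [hfun]
    exact ⟨hsum, hbd⟩
end

section
/- Pathwise uniqueness and stability: let ν > 0, T > 0, and let u₁, u₂ ∈ C([0,T];H) be weak solutions of the dyadic model with the same forcing path ω : [0,T] → H and initial data u₁(0), u₂(0) ∈ H. Then there is a constant C > 0 depending only on ν such that |u₁(t) − u₂(t)|_H² ≤ exp( C ∫₀ᵗ ( |u₁(s)|_H² + |u₂(s)|_H² ) ds ) · |u₁(0) − u₂(0)|_H² for all t ∈ [0,T]. In particular, if u₁(0) = u₂(0) then u₁(t) = u₂(t) for all t ∈ [0,T]. -/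
/-- The `H`-norm `|x|_H = (Σ_{n≥1} x_n²)^{1/2}`. -/
noncomputable def Hnorm (x : ℕ → ℝ) : ℝ := Real.sqrt (∑' n : ℕ, (x (n + 1)) ^ 2)

/-- Membership in `H`: the convention `x 0 = 0` together with `Σ_{n≥1} x_n² < ∞`. -/
def memH (x : ℕ → ℝ) : Prop := x 0 = 0 ∧ Summable (fun n : ℕ => (x (n + 1)) ^ 2)

/-- The `H`-inner product `⟨x,y⟩_H = Σ_{n≥1} x_n y_n`. -/
noncomputable def Hinner (x y : ℕ → ℝ) : ℝ := ∑' n : ℕ, x (n + 1) * y (n + 1)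

/-- Continuity of a path `[0,T] → H` with respect to the `H`-norm. -/
def ContPathH (T : ℝ) (u : ℝ → ℕ → ℝ) : Prop :=
  ∀ t ∈ Set.Icc (0 : ℝ) T, ∀ ε > (0 : ℝ), ∃ δ > (0 : ℝ), ∀ s ∈ Set.Icc (0 : ℝ) T,
    |s - t| < δ → Hnorm (fun n => u s n - u t n) < ε

/-- `u ∈ C([0,T];H)` is a weak solution of the dyadic model with viscosity `ν`,
forcing path `ω` and initial datum `u0`: for every `φ ∈ D(A)` and `t ∈ [0,T]`,
`⟨u(t),φ⟩_H + ν ∫₀ᵗ Σ_{n≥1} u_n(s) k_n² φ_n ds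
  = ⟨u0,φ⟩_H + ∫₀ᵗ ⟨B(u(s),φ),u(s)⟩_H ds + ⟨ω(t),φ⟩_H`. -/
def IsWeakSolution (k0 ν T : ℝ) (ω : ℝ → ℕ → ℝ) (u0 : ℕ → ℝ) (u : ℝ → ℕ → ℝ) : Prop :=
  (∀ t ∈ Set.Icc (0 : ℝ) T, memH (u t)) ∧ ContPathH T u ∧
  ∀ φ : ℕ → ℝ, φ 0 = 0 →
    Summable (fun n : ℕ => (kseq k0 (n + 1)) ^ 4 * (φ (n + 1)) ^ 2) →
    ∀ t ∈ Set.Icc (0 : ℝ) T,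
      Hinner (u t) φ
          + ν * ∫ s in (0 : ℝ)..t, ∑' n : ℕ, u s (n + 1) * (kseq k0 (n + 1)) ^ 2 * φ (n + 1)
        = Hinner u0 φ
          + (∫ s in (0 : ℝ)..t, ∑' n : ℕ, Bop k0 (u s) φ (n + 1) * u s (n + 1))
          + Hinner (ω t) φ

/-- `ω ∈ C^α([0,T];H)`: an `H`-valued path which is `α`-Hölder continuous. -/
def IsHolderPath (T α : ℝ) (ω : ℝ → ℕ → ℝ) : Prop :=
  (∀ t ∈ Set.Icc (0 : ℝ) T, memH (ω t)) ∧
  ∃ Cω : ℝ, ∀ s ∈ Set.Icc (0 : ℝ) T, ∀ t ∈ Set.Icc (0 : ℝ) T,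
    Hnorm (fun n => ω t n - ω s n) ≤ Cω * |t - s| ^ α

open Set MeasureTheory

lemma sq_hnorm (x : ℕ → ℝ) : Hnorm x ^ 2 = ∑' n, x (n + 1) ^ 2 :=
  Real.sq_sqrt (tsum_nonneg fun _ => sq_nonneg _)

lemma memℓp_two_iff_summable_sq {f : ℕ → ℝ} : Memℓp f 2 ↔ Summable fun n => f n ^ 2 := by
  rw [memℓp_gen_iff (by norm_num)]
  simp [Real.norm_eq_abs, sq_abs]

lemma hnorm_eq_norm_lp {x : ℕ → ℝ} (hx : Memℓp (fun n => x (n + 1)) 2) :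
    Hnorm x = ‖(⟨_, hx⟩ : lp (fun _ : ℕ => ℝ) 2)‖ := by
  rw [lp.norm_eq_tsum_rpow (by norm_num), Hnorm, Real.sqrt_eq_rpow]
  simp [Real.norm_eq_abs, sq_abs]

namespace memH

variable {x y : ℕ → ℝ}

lemma memℓp (hx : memH x) : Memℓp (fun n => x (n + 1)) 2 :=
  memℓp_two_iff_summable_sq.2 hx.2

lemma sub (hx : memH x) (hy : memH y) : memH fun n => x n - y n :=
  ⟨by simp [hx.1, hy.1], memℓp_two_iff_summable_sq.1 (hx.memℓp.sub hy.memℓp)⟩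

lemma sq_le_sq_hnorm (hx : memH x) (n : ℕ) : x n ^ 2 ≤ Hnorm x ^ 2 := by
  rw [sq_hnorm]
  cases n with
  | zero => simpa [hx.1] using tsum_nonneg fun n => sq_nonneg (x (n + 1))
  | succ n => exact hx.2.le_tsum n fun _ _ => sq_nonneg _

lemma abs_le_hnorm (hx : memH x) (n : ℕ) : |x n| ≤ Hnorm x :=
  (sq_le_sq.1 (hx.sq_le_sq_hnorm n)).trans_eq (abs_of_nonneg (Real.sqrt_nonneg _))

lemma sum_range_sq_le_sq_hnorm (hx : memH x) (N : ℕ) :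
    ∑ j ∈ Finset.range N, x (j + 1) ^ 2 ≤ Hnorm x ^ 2 :=
  sq_hnorm x ▸ hx.2.sum_le_tsum _ fun _ _ => sq_nonneg _

lemma hnorm_sub_eq_norm_sub (hx : memH x) (hy : memH y) :
    Hnorm (fun n => x n - y n) =
      ‖(⟨_, hx.memℓp⟩ : lp (fun _ : ℕ => ℝ) 2) - ⟨_, hy.memℓp⟩‖ := by
  rw [hnorm_eq_norm_lp (x := fun n => x n - y n) (memH.sub hx hy).memℓp]
  rfl

lemma hnorm_sub_le (hx : memH x) (hy : memH y) :
    Hnorm (fun n => x n - y n) ≤ Hnorm x + Hnorm y := by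
  rw [hnorm_sub_eq_norm_sub hx hy, hnorm_eq_norm_lp hx.memℓp, hnorm_eq_norm_lp hy.memℓp]
  exact norm_sub_le _ _

lemma abs_hnorm_sub_hnorm_le (hx : memH x) (hy : memH y) :
    |Hnorm x - Hnorm y| ≤ Hnorm (fun n => x n - y n) := by
  rw [hnorm_sub_eq_norm_sub hx hy, hnorm_eq_norm_lp hx.memℓp, hnorm_eq_norm_lp hy.memℓp]
  exact abs_norm_sub_norm_le _ _

end memH

namespace ContPathH

variable {T : ℝ} {u v : ℝ → ℕ → ℝ}

lemma continuousOn_apply (hc : ContPathH T u) (hm : ∀ t ∈ Icc 0 T, memH (u t)) (n : ℕ) :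
    ContinuousOn (fun s => u s n) (Icc 0 T) := by
  intro t ht
  rw [Metric.continuousWithinAt_iff]
  intro ε hε
  obtain ⟨δ, hδ, h⟩ := hc t ht ε hε
  exact ⟨δ, hδ, fun s hs hst =>
    ((memH.sub (hm s hs) (hm t ht)).abs_le_hnorm n).trans_lt (h s hs hst)⟩

lemma continuousOn_hnorm (hc : ContPathH T u) (hm : ∀ t ∈ Icc 0 T, memH (u t)) :
    ContinuousOn (fun s => Hnorm (u s)) (Icc 0 T) := by
  intro t ht
  rw [Metric.continuousWithinAt_iff]
  intro ε hε
  obtain ⟨δ, hδ, h⟩ := hc t ht ε hε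
  exact ⟨δ, hδ, fun s hs hst =>
    (memH.abs_hnorm_sub_hnorm_le (hm s hs) (hm t ht)).trans_lt (h s hs hst)⟩

lemma sub (hu : ContPathH T u) (hv : ContPathH T v) (hmu : ∀ t ∈ Icc 0 T, memH (u t))
    (hmv : ∀ t ∈ Icc 0 T, memH (v t)) : ContPathH T fun s n => u s n - v s n := by
  intro t ht ε hε
  obtain ⟨δ₁, hδ₁, h₁⟩ := hu t ht (ε / 2) (half_pos hε)
  obtain ⟨δ₂, hδ₂, h₂⟩ := hv t ht (ε / 2) (half_pos hε)
  refine ⟨min δ₁ δ₂, lt_min hδ₁ hδ₂, fun s hs hst => ?_⟩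
  have hsplit : (fun n => (u s n - v s n) - (u t n - v t n)) =
      fun n => (u s n - u t n) - (v s n - v t n) := by
    funext n; ring
  calc Hnorm (fun n => (u s n - v s n) - (u t n - v t n))
      ≤ Hnorm (fun n => u s n - u t n) + Hnorm (fun n => v s n - v t n) := by
        rw [hsplit]
        exact memH.hnorm_sub_le (memH.sub (hmu s hs) (hmu t ht)) (memH.sub (hmv s hs) (hmv t ht))
    _ < ε / 2 + ε / 2 :=
        add_lt_add (h₁ s hs (hst.trans_le (min_le_left _ _)))
          (h₂ s hs (hst.trans_le (min_le_right _ _)))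
    _ = ε := add_halves ε

end ContPathH

-- Functions continuous on `[a, b]` are extended to `ℝ` through `projIcc`, so that the
-- fundamental theorem of calculus for everywhere differentiable functions applies.
section Clamp

variable {a b : ℝ} {f : ℝ → ℝ}

lemma ContinuousOn.continuous_comp_projIcc (hab : a ≤ b) (hf : ContinuousOn f (Icc a b)) :
    Continuous fun x => f (projIcc a b hab x) :=
  hf.comp_continuous (continuous_subtype_val.comp continuous_projIcc) fun x =>
    (projIcc a b hab x).2

lemma integral_comp_projIcc (hab : a ≤ b) {t : ℝ} (ht : t ∈ Icc a b) :
    ∫ x in a..t, f (projIcc a b hab x) = ∫ x in a..t, f x :=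
  intervalIntegral.integral_congr fun x hx => by
    rw [uIcc_of_le ht.1] at hx
    rw [projIcc_of_mem hab ⟨hx.1, hx.2.trans ht.2⟩]

lemma ContinuousOn.hasDerivAt_integral_comp_projIcc (hab : a ≤ b)
    (hf : ContinuousOn f (Icc a b)) (x : ℝ) :
    HasDerivAt (fun t => ∫ s in a..t, f (projIcc a b hab s)) (f (projIcc a b hab x)) x :=
  ((hf.continuous_comp_projIcc hab).integral_hasStrictDerivAt a x).hasDerivAt

end Clamp

theorem le_mul_exp_integral_of_le_add_integral {a b E₀ : ℝ} {E g : ℝ → ℝ}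
    (hE : ContinuousOn E (Icc a b)) (hg : ContinuousOn g (Icc a b))
    (hg₀ : ∀ s ∈ Icc a b, 0 ≤ g s)
    (h : ∀ t ∈ Icc a b, E t ≤ E₀ + ∫ s in a..t, g s * E s) :
    ∀ t ∈ Icc a b, E t ≤ E₀ * Real.exp (∫ s in a..t, g s) := by
  intro t ht
  have hab : a ≤ b := ht.1.trans ht.2
  set G := fun t => E₀ + ∫ s in a..t, g (projIcc a b hab s) * E (projIcc a b hab s)
  set Φ := fun t => ∫ s in a..t, g (projIcc a b hab s)
  have hG : ∀ x, HasDerivAt G (g (projIcc a b hab x) * E (projIcc a b hab x)) x := fun x =>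
    ((hg.mul hE).hasDerivAt_integral_comp_projIcc hab x).const_add E₀
  have hΦ : ∀ x, HasDerivAt Φ (g (projIcc a b hab x)) x := hg.hasDerivAt_integral_comp_projIcc hab
  have hGΦ : ∀ x, HasDerivAt (fun t => G t * Real.exp (-Φ t))
      (g (projIcc a b hab x) * Real.exp (-Φ x) * (E (projIcc a b hab x) - G x)) x := fun x =>
    ((hG x).mul (hΦ x).neg.exp).congr_deriv (by simp only [Pi.neg_apply]; ring)
  have hE_le_G : ∀ x ∈ Icc a b, E x ≤ G x := fun x hx =>
    (h x hx).trans_eq (by rw [← integral_comp_projIcc hab hx])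
  -- `G · exp (-Φ)` is antitone because `E ≤ G`, and it starts at `E₀`.
  have hanti : AntitoneOn (fun t => G t * Real.exp (-Φ t)) (Icc a b) := by
    refine antitoneOn_of_deriv_nonpos (convex_Icc a b)
      (continuous_iff_continuousAt.2 fun x => (hGΦ x).continuousAt).continuousOn
      (fun x _ => (hGΦ x).differentiableAt.differentiableWithinAt) fun x hx => ?_
    rw [interior_Icc] at hx
    have hx' : x ∈ Icc a b := Ioo_subset_Icc_self hx
    rw [(hGΦ x).deriv, projIcc_of_mem hab hx']
    exact mul_nonpos_of_nonneg_of_nonpos (mul_nonneg (hg₀ x hx') (Real.exp_pos _).le)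
      (sub_nonpos.2 (hE_le_G x hx'))
  have hGt : G t * Real.exp (-Φ t) ≤ E₀ := by
    simpa [G, Φ] using hanti (left_mem_Icc.2 hab) ht ht.1
  calc E t ≤ G t := hE_le_G t ht
    _ = G t * Real.exp (-Φ t) * Real.exp (Φ t) := by
        rw [mul_assoc, ← Real.exp_add, neg_add_cancel, Real.exp_zero, mul_one]
    _ ≤ E₀ * Real.exp (Φ t) := by gcongr
    _ = E₀ * Real.exp (∫ s in a..t, g s) := by
        congr 2
        exact integral_comp_projIcc hab ht

theorem sum_sq_eq_add_integral {ι : Type*} (S : Finset ι) {a b : ℝ} (hab : a ≤ b)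
    {f F : ι → ℝ → ℝ} (hF : ∀ i, ContinuousOn (F i) (Icc a b))
    (hf : ∀ i, ∀ t ∈ Icc a b, f i t = f i a + ∫ s in a..t, F i s) :
    ∑ i ∈ S, f i b ^ 2 = ∑ i ∈ S, f i a ^ 2 + ∫ s in a..b, ∑ i ∈ S, 2 * f i s * F i s := by
  set f' := fun i t => f i a + ∫ s in a..t, F i (projIcc a b hab s)
  have hff' : ∀ i, ∀ t ∈ Icc a b, f' i t = f i t := fun i t ht => by
    rw [hf i t ht]
    exact congrArg (f i a + ·) (integral_comp_projIcc hab ht)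
  have hderiv : ∀ x, HasDerivAt (fun t => ∑ i ∈ S, f' i t ^ 2)
      (∑ i ∈ S, 2 * f' i x * F i (projIcc a b hab x)) x := fun x =>
    (HasDerivAt.fun_sum fun i _ =>
      (((hF i).hasDerivAt_integral_comp_projIcc hab x).const_add (f i a)).pow 2).congr_deriv
      (Finset.sum_congr rfl fun i _ => by simp [f'])
  have hcont : Continuous fun x => ∑ i ∈ S, 2 * f' i x * F i (projIcc a b hab x) :=
    continuous_finsetSum S fun i _ =>
      (continuous_const.mul (continuous_iff_continuousAt.2 fun x =>
        (((hF i).hasDerivAt_integral_comp_projIcc hab x).const_add (f i a)).continuousAt)).mul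
        ((hF i).continuous_comp_projIcc hab)
  have hftc := intervalIntegral.integral_eq_sub_of_hasDerivAt (fun x _ => hderiv x)
    (hcont.intervalIntegrable a b)
  have hl := left_mem_Icc.2 hab
  have hr := right_mem_Icc.2 hab
  have hintegrand : ∫ x in a..b, ∑ i ∈ S, 2 * f' i x * F i (projIcc a b hab x) =
      ∫ x in a..b, ∑ i ∈ S, 2 * f i x * F i x :=
    intervalIntegral.integral_congr fun x hx => by
      rw [uIcc_of_le hab] at hx
      simp only [hff' _ _ hx, projIcc_of_mem hab hx]
  simp only [hintegrand, hff' _ _ hl, hff' _ _ hr] at hftc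
  linarith

-- Young's inequality on each cross term: the dissipation `ν K₁² (a₁ - b₁)²` absorbs the
-- factors `K₁`, and the shell below pays for `K₀` with half of its own dissipation.
lemma two_mul_drift_le {ν : ℝ} (hν : 0 < ν) (K₀ K₁ a₀ a₁ a₂ b₀ b₁ b₂ : ℝ) :
    2 * (a₁ - b₁) * (K₁ * (a₁ * a₂ - b₁ * b₂) - K₀ * (a₀ ^ 2 - b₀ ^ 2) - ν * K₁ ^ 2 * (a₁ - b₁)) ≤
      ν / 2 * (K₀ ^ 2 * (a₀ - b₀) ^ 2 - K₁ ^ 2 * (a₁ - b₁) ^ 2)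
        + 2 / ν * ((a₁ - b₁) ^ 2 * a₂ ^ 2 + (a₂ - b₂) ^ 2 * b₁ ^ 2)
        + 4 / ν * (a₁ - b₁) ^ 2 * (a₀ ^ 2 + b₀ ^ 2) := by
  rw [← sub_nonneg]
  field_simp
  nlinarith [sq_nonneg (ν * K₁ * (a₁ - b₁) - 2 * (a₁ - b₁) * a₂),
    sq_nonneg (ν * K₁ * (a₁ - b₁) - 2 * (a₂ - b₂) * b₁),
    sq_nonneg (ν * K₀ * (a₀ - b₀) / 2 + 2 * (a₁ - b₁) * a₀),
    sq_nonneg (ν * K₀ * (a₀ - b₀) / 2 + 2 * (a₁ - b₁) * b₀), sq_nonneg (K₁ * (a₁ - b₁))]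

-- `d/dt (u_m - v_m)` for two solutions `u`, `v` of the dyadic model; the forcing cancels.
noncomputable def diffDrift (k0 ν : ℝ) (a b : ℕ → ℝ) (m : ℕ) : ℝ :=
  Bop k0 b b m - Bop k0 a a m - ν * kseq k0 m ^ 2 * (a m - b m)

lemma diffDrift_succ (k0 ν : ℝ) (a b : ℕ → ℝ) (j : ℕ) :
    diffDrift k0 ν a b (j + 1) =
      kseq k0 (j + 1) * (a (j + 1) * a (j + 2) - b (j + 1) * b (j + 2))
        - kseq k0 j * (a j ^ 2 - b j ^ 2) - ν * kseq k0 (j + 1) ^ 2 * (a (j + 1) - b (j + 1)) := by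
  simp only [diffDrift, Bop, Nat.add_sub_cancel]
  ring

lemma sum_two_mul_diffDrift_le {k0 ν A B E : ℝ} (hν : 0 < ν) {a b : ℕ → ℝ} (ha₀ : a 0 = 0)
    (hb₀ : b 0 = 0) (hA : ∀ n, a n ^ 2 ≤ A) (hB : ∀ n, b n ^ 2 ≤ B)
    (hE : ∀ N, ∑ j ∈ Finset.range N, (a (j + 1) - b (j + 1)) ^ 2 ≤ E) (N : ℕ) :
    ∑ j ∈ Finset.range N, 2 * (a (j + 1) - b (j + 1)) * diffDrift k0 ν a b (j + 1) ≤
      6 / ν * (A + B) * E := by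
  set w := fun n => (a n - b n) ^ 2
  set c := fun n => kseq k0 n ^ 2 * w n
  have hA₀ : 0 ≤ A := (sq_nonneg _).trans (hA 0)
  have hB₀ : 0 ≤ B := (sq_nonneg _).trans (hB 0)
  have hterm : ∀ j, 2 * (a (j + 1) - b (j + 1)) * diffDrift k0 ν a b (j + 1) ≤
      ν / 2 * (c j - c (j + 1)) + 2 / ν * (w (j + 1) * A + w (j + 2) * B)
        + 4 / ν * w (j + 1) * (A + B) := fun j => by
    rw [diffDrift_succ]
    refine (two_mul_drift_le hν _ _ _ _ _ _ _ _).trans ?_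
    gcongr
    exacts [hA _, hB _, hA _, hB _]
  have hc₀ : c 0 = 0 := by simp [c, w, ha₀, hb₀]
  have hS₂ : ∑ j ∈ Finset.range N, w (j + 2) ≤ E := by
    have := hE (N + 1)
    rw [Finset.sum_range_succ'] at this
    linarith [sq_nonneg (a 1 - b 1)]
  calc ∑ j ∈ Finset.range N, 2 * (a (j + 1) - b (j + 1)) * diffDrift k0 ν a b (j + 1)
      ≤ ∑ j ∈ Finset.range N, (ν / 2 * (c j - c (j + 1)) + 2 / ν * (w (j + 1) * A + w (j + 2) * B)
        + 4 / ν * w (j + 1) * (A + B)) := Finset.sum_le_sum fun j _ => hterm j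
    _ = ν / 2 * (c 0 - c N) + 2 / ν * (A * ∑ j ∈ Finset.range N, w (j + 1)
          + B * ∑ j ∈ Finset.range N, w (j + 2))
        + 4 / ν * (A + B) * ∑ j ∈ Finset.range N, w (j + 1) := by
      simp only [Finset.sum_add_distrib, ← Finset.mul_sum, ← Finset.sum_mul,
        Finset.sum_range_sub']
      ring
    _ ≤ ν / 2 * 0 + 2 / ν * (A * E + B * E) + 4 / ν * (A + B) * E := by
      have := hE N
      gcongr
      rw [hc₀, zero_sub, neg_nonpos]
      exact mul_nonneg (sq_nonneg _) (sq_nonneg _)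
    _ = 6 / ν * (A + B) * E := by ring

lemma hinner_single (x : ℕ → ℝ) (m : ℕ) : Hinner x (Pi.single (m + 1) 1) = x (m + 1) := by
  rw [Hinner, tsum_eq_single m fun n hn => by simp [hn]]
  simp

lemma summable_single_weight (k0 : ℝ) (m : ℕ) :
    Summable fun n : ℕ => kseq k0 (n + 1) ^ 4 * (Pi.single (m + 1) 1 : ℕ → ℝ) (n + 1) ^ 2 :=
  summable_of_ne_finset_zero (s := {m}) fun n hn => by
    simp [Finset.mem_singleton.not.1 hn]

lemma tsum_bop_single_mul (k0 : ℝ) {u : ℕ → ℝ} (hu : u 0 = 0) (m : ℕ) :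
    ∑' n, Bop k0 u (Pi.single (m + 1) 1) (n + 1) * u (n + 1) = -Bop k0 u u (m + 1) := by
  cases m with
  | zero =>
    rw [tsum_eq_single 1 fun n hn => by simp [Bop, hn]]
    simp [Bop, hu]
  | succ m =>
    rw [tsum_eq_sum (s := {m, m + 2}) fun n hn => by
      simp only [Finset.mem_insert, Finset.mem_singleton, not_or] at hn
      simp [Bop, hn.1, hn.2]]
    rw [Finset.sum_pair (by omega)]
    simp only [Bop, add_tsub_cancel_right, Pi.single_eq_same,
      Pi.single_eq_of_ne (show m ≠ m + 1 + 1 by omega),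
      Pi.single_eq_of_ne (show m + 2 + 1 + 1 ≠ m + 1 + 1 by omega)]
    ring

namespace IsWeakSolution

variable {k0 ν T : ℝ} {ω : ℝ → ℕ → ℝ} {u0 v0 : ℕ → ℝ} {u v : ℝ → ℕ → ℝ}

lemma continuousOn_apply (hu : IsWeakSolution k0 ν T ω u0 u) (n : ℕ) :
    ContinuousOn (fun s => u s n) (Icc 0 T) :=
  hu.2.1.continuousOn_apply hu.1 n

lemma continuousOn_bop (hu : IsWeakSolution k0 ν T ω u0 u) (m : ℕ) :
    ContinuousOn (fun s => Bop k0 (u s) (u s) m) (Icc 0 T) := by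
  have := hu.continuousOn_apply
  simp only [Bop]
  fun_prop

lemma continuousOn_diffDrift (hu : IsWeakSolution k0 ν T ω u0 u)
    (hv : IsWeakSolution k0 ν T ω v0 v) (m : ℕ) :
    ContinuousOn (fun s => diffDrift k0 ν (u s) (v s) m) (Icc 0 T) :=
  ((hv.continuousOn_bop m).sub (hu.continuousOn_bop m)).sub
    (continuousOn_const.mul ((hu.continuousOn_apply m).sub (hv.continuousOn_apply m)))

lemma memH_sub (hu : IsWeakSolution k0 ν T ω u0 u) (hv : IsWeakSolution k0 ν T ω v0 v) :
    ∀ s ∈ Icc 0 T, memH fun n => u s n - v s n :=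
  fun s hs => memH.sub (hu.1 s hs) (hv.1 s hs)

lemma continuousOn_hnorm (hu : IsWeakSolution k0 ν T ω u0 u) :
    ContinuousOn (fun s => Hnorm (u s)) (Icc 0 T) :=
  hu.2.1.continuousOn_hnorm hu.1

lemma continuousOn_hnorm_sub (hu : IsWeakSolution k0 ν T ω u0 u)
    (hv : IsWeakSolution k0 ν T ω v0 v) :
    ContinuousOn (fun s => Hnorm fun n => u s n - v s n) (Icc 0 T) :=
  (hu.2.1.sub hv.2.1 hu.1 hv.1).continuousOn_hnorm (hu.memH_sub hv)

lemma apply_add_integral (hu : IsWeakSolution k0 ν T ω u0 u) (m : ℕ) {t : ℝ}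
    (ht : t ∈ Icc 0 T) :
    u t (m + 1) + ν * ∫ s in 0..t, u s (m + 1) * kseq k0 (m + 1) ^ 2 =
      u0 (m + 1) - (∫ s in 0..t, Bop k0 (u s) (u s) (m + 1)) + ω t (m + 1) := by
  have h := hu.2.2 _ (by simp) (summable_single_weight k0 m) t ht
  have hbop : ∫ s in 0..t, ∑' n, Bop k0 (u s) (Pi.single (m + 1) 1) (n + 1) * u s (n + 1) =
      ∫ s in 0..t, -Bop k0 (u s) (u s) (m + 1) :=
    intervalIntegral.integral_congr fun s hs => by
      rw [uIcc_of_le ht.1] at hs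
      exact tsum_bop_single_mul k0 (hu.1 s ⟨hs.1, hs.2.trans ht.2⟩).1 m
  have hvisc : ∫ s in 0..t, ∑' n, u s (n + 1) * kseq k0 (n + 1) ^ 2 *
        (Pi.single (m + 1) 1 : ℕ → ℝ) (n + 1) =
      ∫ s in 0..t, u s (m + 1) * kseq k0 (m + 1) ^ 2 :=
    intervalIntegral.integral_congr fun s _ => hinner_single (fun n => u s n * kseq k0 n ^ 2) m
  rw [hinner_single, hinner_single, hinner_single, hbop, hvisc,
    intervalIntegral.integral_neg] at h
  linarith

lemma sub_apply_eq_add_integral (hu : IsWeakSolution k0 ν T ω u0 u)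
    (hv : IsWeakSolution k0 ν T ω v0 v) (m : ℕ) {t : ℝ} (ht : t ∈ Icc 0 T) :
    u t (m + 1) - v t (m + 1) =
      (u 0 (m + 1) - v 0 (m + 1)) + ∫ s in 0..t, diffDrift k0 ν (u s) (v s) (m + 1) := by
  have h0 : (0 : ℝ) ∈ Icc 0 T := ⟨le_rfl, ht.1.trans ht.2⟩
  have hsub : uIcc 0 t ⊆ Icc 0 T := by
    rw [uIcc_of_le ht.1]
    exact Icc_subset_Icc_right ht.2
  have hbop : ∀ {w : ℝ → ℕ → ℝ} {w0 : ℕ → ℝ}, IsWeakSolution k0 ν T ω w0 w →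
      IntervalIntegrable (fun s => Bop k0 (w s) (w s) (m + 1)) volume 0 t :=
    fun hw => ((hw.continuousOn_bop _).mono hsub).intervalIntegrable
  have hlin : ∀ {w : ℝ → ℕ → ℝ} {w0 : ℕ → ℝ}, IsWeakSolution k0 ν T ω w0 w →
      IntervalIntegrable (fun s => w s (m + 1) * kseq k0 (m + 1) ^ 2) volume 0 t :=
    fun hw => (((hw.continuousOn_apply _).mul continuousOn_const).mono hsub).intervalIntegrable
  have hdrift : ∫ s in 0..t, diffDrift k0 ν (u s) (v s) (m + 1) =
      (∫ s in 0..t, Bop k0 (v s) (v s) (m + 1)) - (∫ s in 0..t, Bop k0 (u s) (u s) (m + 1))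
        - ν * ((∫ s in 0..t, u s (m + 1) * kseq k0 (m + 1) ^ 2)
          - ∫ s in 0..t, v s (m + 1) * kseq k0 (m + 1) ^ 2) := by
    rw [← intervalIntegral.integral_sub (hbop hv) (hbop hu),
      ← intervalIntegral.integral_sub (hlin hu) (hlin hv), ← intervalIntegral.integral_const_mul,
      ← intervalIntegral.integral_sub ((hbop hv).sub (hbop hu))
        (((hlin hu).sub (hlin hv)).const_mul ν)]
    exact intervalIntegral.integral_congr fun s _ => by simp only [diffDrift]; ring
  have hut := hu.apply_add_integral m ht
  have hvt := hv.apply_add_integral m ht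
  have hu0 := hu.apply_add_integral m h0
  have hv0 := hv.apply_add_integral m h0
  simp only [intervalIntegral.integral_same] at hu0 hv0
  linarith

lemma hnorm_sub_sq_le_add_integral (hν : 0 < ν) (hu : IsWeakSolution k0 ν T ω u0 u)
    (hv : IsWeakSolution k0 ν T ω v0 v) {t : ℝ} (ht : t ∈ Icc 0 T) :
    Hnorm (fun n => u t n - v t n) ^ 2 ≤ Hnorm (fun n => u 0 n - v 0 n) ^ 2 +
      ∫ s in 0..t, 6 / ν * (Hnorm (u s) ^ 2 + Hnorm (v s) ^ 2) *
        Hnorm (fun n => u s n - v s n) ^ 2 := by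
  have hsub : Icc 0 t ⊆ Icc 0 T := Icc_subset_Icc_right ht.2
  have hw := hu.memH_sub hv
  have hmajorant : IntervalIntegrable (fun s => 6 / ν * (Hnorm (u s) ^ 2 + Hnorm (v s) ^ 2) *
      Hnorm (fun n => u s n - v s n) ^ 2) volume 0 t := by
    have := hu.continuousOn_hnorm
    have := hv.continuousOn_hnorm
    have := hu.continuousOn_hnorm_sub hv
    exact ContinuousOn.intervalIntegrable_of_Icc ht.1 (ContinuousOn.mono (by fun_prop) hsub)
  have htrunc : ∀ N, ∑ j ∈ Finset.range N, (u t (j + 1) - v t (j + 1)) ^ 2 ≤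
      Hnorm (fun n => u 0 n - v 0 n) ^ 2 + ∫ s in 0..t, 6 / ν *
        (Hnorm (u s) ^ 2 + Hnorm (v s) ^ 2) * Hnorm (fun n => u s n - v s n) ^ 2 := fun N => by
    rw [sum_sq_eq_add_integral (Finset.range N) ht.1
      (f := fun j s => u s (j + 1) - v s (j + 1))
      (F := fun j s => diffDrift k0 ν (u s) (v s) (j + 1))
      (fun j => (hu.continuousOn_diffDrift hv (j + 1)).mono hsub)
      (fun j r hr => hu.sub_apply_eq_add_integral hv j (hsub hr))]
    gcongr ?_ + ?_
    · exact (hw 0 (hsub (left_mem_Icc.2 ht.1))).sum_range_sq_le_sq_hnorm N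
    · refine intervalIntegral.integral_mono_on ht.1 ?_ hmajorant fun s hs => ?_
      · have := hu.continuousOn_apply
        have := hv.continuousOn_apply
        have := hu.continuousOn_diffDrift hv
        exact ContinuousOn.intervalIntegrable_of_Icc ht.1 (ContinuousOn.mono (by fun_prop) hsub)
      · exact sum_two_mul_diffDrift_le hν (hu.1 s (hsub hs)).1 (hv.1 s (hsub hs)).1
          (hu.1 s (hsub hs)).sq_le_sq_hnorm (hv.1 s (hsub hs)).sq_le_sq_hnorm
          (hw s (hsub hs)).sum_range_sq_le_sq_hnorm N
  rw [sq_hnorm]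
  exact le_of_tendsto' (hw t ht).2.hasSum.tendsto_sum_nat htrunc

end IsWeakSolution

/-- Pathwise uniqueness and stability: if `u₁, u₂ ∈ C([0,T];H)` are weak solutions
of the dyadic model with the same forcing path `ω : [0,T] → H`, then for a constant
`C > 0` depending only on `ν`,
`|u₁(t) − u₂(t)|_H² ≤ exp(C ∫₀ᵗ (|u₁(s)|_H² + |u₂(s)|_H²) ds) · |u₁(0) − u₂(0)|_H²`
for all `t ∈ [0,T]`; in particular equal initial data force `u₁ = u₂` on `[0,T]`. -/
theorem stmt5 (ν : ℝ) (hν : 0 < ν) :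
    ∃ C : ℝ, 0 < C ∧ ∀ (k0 T : ℝ), 0 < k0 → 0 < T →
      ∀ ω : ℝ → ℕ → ℝ, (∀ t ∈ Set.Icc (0 : ℝ) T, memH (ω t)) →
      ∀ u1 u2 : ℝ → ℕ → ℝ,
        IsWeakSolution k0 ν T ω (u1 0) u1 → IsWeakSolution k0 ν T ω (u2 0) u2 →
        (∀ t ∈ Set.Icc (0 : ℝ) T,
          (Hnorm (fun n => u1 t n - u2 t n)) ^ 2 ≤
            Real.exp (C * ∫ s in (0 : ℝ)..t, ((Hnorm (u1 s)) ^ 2 + (Hnorm (u2 s)) ^ 2)) *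
              (Hnorm (fun n => u1 0 n - u2 0 n)) ^ 2) ∧
        ((∀ n, u1 0 n = u2 0 n) → ∀ t ∈ Set.Icc (0 : ℝ) T, ∀ n, u1 t n = u2 t n) := by
  refine ⟨6 / ν, by positivity, fun k0 T _ _ ω _ u1 u2 h1 h2 => ?_⟩
  have hstab : ∀ t ∈ Icc (0 : ℝ) T, Hnorm (fun n => u1 t n - u2 t n) ^ 2 ≤
      Real.exp (6 / ν * ∫ s in 0..t, (Hnorm (u1 s) ^ 2 + Hnorm (u2 s) ^ 2)) *
        Hnorm (fun n => u1 0 n - u2 0 n) ^ 2 := fun t ht => by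
    have := h1.continuousOn_hnorm
    have := h2.continuousOn_hnorm
    have := h1.continuousOn_hnorm_sub h2
    have h := le_mul_exp_integral_of_le_add_integral
      (E := fun s => Hnorm (fun n => u1 s n - u2 s n) ^ 2)
      (g := fun s => 6 / ν * (Hnorm (u1 s) ^ 2 + Hnorm (u2 s) ^ 2)) (by fun_prop) (by fun_prop)
      (fun s _ => by positivity) (fun t ht => h1.hnorm_sub_sq_le_add_integral hν h2 ht) t ht
    rwa [intervalIntegral.integral_const_mul, mul_comm] at h
  refine ⟨hstab, fun h0 t ht n => sub_eq_zero.1 (abs_nonpos_iff.1 ?_)⟩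
  have hnorm0 : Hnorm (fun n => u1 t n - u2 t n) = 0 :=
    (sq_nonpos_iff _).1 (by simpa [h0, Hnorm] using hstab t ht)
  exact hnorm0 ▸ (h1.memH_sub h2 t ht).abs_le_hnorm n
end

section
/- Lower bound for the mean energy flux: let σ > 0, α ∈ (0,1) and δ > 0 with δ < (1−α) σ^{2/3} / (2^{1/3} α). Let N ≥ 1 and let (ε_n)_{1≤n≤N}, (φ_n)_{0≤n≤N} be real numbers with φ₀ = 0, satisfying the balance relation ε₁ + φ₁ = σ²/2 and ε_n + φ_n = φ_{n−1} for 2 ≤ n ≤ N, and 0 ≤ ε_n ≤ δ αⁿ |φ_n|^{2/3} for 1 ≤ n ≤ N. Then for every 1 ≤ n ≤ N, φ_n ≥ σ²/2 − δ (1/2)^{2/3} σ^{4/3} α (1 + α + ⋯ + α^{n−1}) > 0. -/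
set_option maxHeartbeats 1000000


/-- Lower bound for the mean energy flux: let `σ > 0`, `α ∈ (0,1)`,
`0 < δ < (1−α)σ^{2/3}/(2^{1/3}α)` (with `σ^{2/3} = (σ²)^{1/3}`), `N ≥ 1`, and let
`(ε_n)`, `(φ_n)` satisfy `φ₀ = 0`, the balance relation `ε₁ + φ₁ = σ²/2`,
`ε_n + φ_n = φ_{n−1}` for `2 ≤ n ≤ N`, and `0 ≤ ε_n ≤ δ αⁿ |φ_n|^{2/3}` for
`1 ≤ n ≤ N` (with `|φ_n|^{2/3} = (φ_n²)^{1/3}`).  Then for `1 ≤ n ≤ N`,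
`φ_n ≥ σ²/2 − δ (1/2)^{2/3} σ^{4/3} α (1 + α + ⋯ + α^{n−1}) > 0`
(with `σ^{4/3} = (σ²)^{2/3}`). -/
theorem stmt11 (σ α δ : ℝ) (hσ : 0 < σ) (hα : α ∈ Set.Ioo (0 : ℝ) 1) (hδ : 0 < δ)
    (hδ' : δ < (1 - α) * (σ ^ 2) ^ ((1 : ℝ) / 3) / ((2 : ℝ) ^ ((1 : ℝ) / 3) * α))
    (N : ℕ) (hN : 1 ≤ N) (ε φ : ℕ → ℝ) (hφ0 : φ 0 = 0)
    (hbal1 : ε 1 + φ 1 = σ ^ 2 / 2)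
    (hbal : ∀ n, 2 ≤ n → n ≤ N → ε n + φ n = φ (n - 1))
    (hε : ∀ n, 1 ≤ n → n ≤ N →
      0 ≤ ε n ∧ ε n ≤ δ * α ^ n * (φ n ^ 2) ^ ((1 : ℝ) / 3)) :
    ∀ n, 1 ≤ n → n ≤ N →
      σ ^ 2 / 2 - δ * ((1 : ℝ) / 2) ^ ((2 : ℝ) / 3) * (σ ^ 2) ^ ((2 : ℝ) / 3) * α *
          (∑ i ∈ Finset.range n, α ^ i) ≤ φ n ∧
      0 < σ ^ 2 / 2 - δ * ((1 : ℝ) / 2) ^ ((2 : ℝ) / 3) * (σ ^ 2) ^ ((2 : ℝ) / 3) * α *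
          (∑ i ∈ Finset.range n, α ^ i) := by
  obtain ⟨hα0, hα1⟩ := hα
  have hs : (0 : ℝ) < σ ^ 2 := by positivity
  obtain ⟨K, hKdef⟩ : ∃ K : ℝ, K = ((1 : ℝ) / 2) ^ ((2 : ℝ) / 3) * (σ ^ 2) ^ ((2 : ℝ) / 3) :=
    ⟨_, rfl⟩
  have hKpos : 0 < K := by rw [hKdef]; positivity
  obtain ⟨C, hCdef⟩ : ∃ C : ℝ, C = δ * K * α := ⟨_, rfl⟩
  have hCpos : 0 < C := by rw [hCdef]; positivity
  have h2pos : (0 : ℝ) < (2 : ℝ) ^ ((1 : ℝ) / 3) := by positivity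
  -- rpow arithmetic facts
  have e1 : (σ ^ 2) ^ ((1 : ℝ) / 3) * (σ ^ 2) ^ ((2 : ℝ) / 3) = σ ^ 2 := by
    rw [← Real.rpow_add hs]
    norm_num
  have e2 : ((1 : ℝ) / 2) ^ ((2 : ℝ) / 3) = ((2 : ℝ) ^ ((2 : ℝ) / 3))⁻¹ := by
    rw [one_div, Real.inv_rpow (by norm_num)]
  have e3 : (2 : ℝ) ^ ((2 : ℝ) / 3) * (2 : ℝ) ^ ((1 : ℝ) / 3) = 2 := by
    rw [← Real.rpow_add (by norm_num)]
    norm_num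
  have hcalc : (σ ^ 2) ^ ((1 : ℝ) / 3) * K / (2 : ℝ) ^ ((1 : ℝ) / 3) = σ ^ 2 / 2 := by
    rw [hKdef, e2]
    have h22 : (0 : ℝ) < (2 : ℝ) ^ ((2 : ℝ) / 3) := by positivity
    field_simp
    nlinarith [e1, e3, h22, h2pos]
  -- δ * α < (σ²/2)^{1/3}
  have hδα : δ * α < (σ ^ 2 / 2) ^ ((1 : ℝ) / 3) := by
    have h1 : δ * α < (1 - α) * (σ ^ 2) ^ ((1 : ℝ) / 3) / (2 : ℝ) ^ ((1 : ℝ) / 3) := by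
      have := mul_lt_mul_of_pos_right hδ' hα0
      calc δ * α < (1 - α) * (σ ^ 2) ^ ((1 : ℝ) / 3) / ((2 : ℝ) ^ ((1 : ℝ) / 3) * α) * α := this
        _ = (1 - α) * (σ ^ 2) ^ ((1 : ℝ) / 3) / (2 : ℝ) ^ ((1 : ℝ) / 3) := by
            field_simp
    have h2 : (1 - α) * (σ ^ 2) ^ ((1 : ℝ) / 3) ≤ (σ ^ 2) ^ ((1 : ℝ) / 3) := by
      nlinarith [Real.rpow_pos_of_pos hs ((1 : ℝ) / 3)]
    have h3 : (σ ^ 2 / 2) ^ ((1 : ℝ) / 3)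
        = (σ ^ 2) ^ ((1 : ℝ) / 3) / (2 : ℝ) ^ ((1 : ℝ) / 3) :=
      Real.div_rpow hs.le (by norm_num) _
    rw [h3]
    calc δ * α < (1 - α) * (σ ^ 2) ^ ((1 : ℝ) / 3) / (2 : ℝ) ^ ((1 : ℝ) / 3) := h1
      _ ≤ (σ ^ 2) ^ ((1 : ℝ) / 3) / (2 : ℝ) ^ ((1 : ℝ) / 3) :=
          (div_le_div_iff_of_pos_right h2pos).mpr h2
  -- |x| ≤ σ²/2 implies (x²)^{1/3} ≤ K
  have habs_bound : ∀ x : ℝ, |x| ≤ σ ^ 2 / 2 → (x ^ 2) ^ ((1 : ℝ) / 3) ≤ K := by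
    intro x hx
    have hx2 : x ^ 2 ≤ (σ ^ 2 / 2) ^ 2 := by
      have := abs_nonneg x
      nlinarith [sq_abs x]
    have h1 : (x ^ 2) ^ ((1 : ℝ) / 3) ≤ ((σ ^ 2 / 2) ^ 2) ^ ((1 : ℝ) / 3) :=
      Real.rpow_le_rpow (sq_nonneg x) hx2 (by norm_num)
    have h2 : ((σ ^ 2 / 2) ^ 2) ^ ((1 : ℝ) / 3) = K := by
      have ha : (σ ^ 2 / 2) ^ 2 = ((1 : ℝ) / 2) ^ (2 : ℕ) * (σ ^ 2) ^ (2 : ℕ) := by ring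
      rw [ha, Real.mul_rpow (by norm_num) (by positivity),
        ← Real.rpow_natCast ((1 : ℝ) / 2) 2, ← Real.rpow_natCast (σ ^ 2) 2,
        ← Real.rpow_mul (by norm_num : (0:ℝ) ≤ 1 / 2), ← Real.rpow_mul hs.le, hKdef]
      norm_num
    linarith
  -- positivity of the lower bound
  have hpos : ∀ n : ℕ, C * (∑ i ∈ Finset.range n, α ^ i) < σ ^ 2 / 2 := by
    intro n
    have hg := geom_sum_mul α n
    obtain ⟨S, hS⟩ : ∃ S : ℝ, S = ∑ i ∈ Finset.range n, α ^ i := ⟨_, rfl⟩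
    rw [← hS] at hg ⊢
    have hSnn : 0 ≤ S := hS ▸ Finset.sum_nonneg fun i _ => pow_nonneg hα0.le i
    have hαn : 0 ≤ α ^ n := pow_nonneg hα0.le n
    have hS1 : S * (1 - α) = 1 - α ^ n := by linear_combination -hg
    have hC1 : C / (1 - α) < σ ^ 2 / 2 := by
      have hD : C < (1 - α) * (σ ^ 2) ^ ((1 : ℝ) / 3) / ((2 : ℝ) ^ ((1 : ℝ) / 3) * α) * K * α := by
        rw [hCdef]
        have := mul_lt_mul_of_pos_right (mul_lt_mul_of_pos_right hδ' hKpos) hα0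
        exact this
      have hEq : (1 - α) * (σ ^ 2) ^ ((1 : ℝ) / 3) / ((2 : ℝ) ^ ((1 : ℝ) / 3) * α) * K * α
          = (1 - α) * ((σ ^ 2) ^ ((1 : ℝ) / 3) * K / (2 : ℝ) ^ ((1 : ℝ) / 3)) := by
        field_simp
      rw [hEq, hcalc] at hD
      rw [div_lt_iff₀ (by linarith)]
      nlinarith
    have hfs : C * S = (C / (1 - α)) * (S * (1 - α)) := by
      have hne : (1 : ℝ) - α ≠ 0 := by intro hc; rw [sub_eq_zero] at hc; linarith
      field_simp
    rw [hfs, hS1]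
    have hCpos' : 0 < C / (1 - α) := div_pos hCpos (by linarith)
    nlinarith
  -- the key step lemma
  have step : ∀ n, 1 ≤ n → n ≤ N → ∀ prev : ℝ, ε n + φ n = prev → 0 < prev →
      prev ≤ σ ^ 2 / 2 → φ n ≤ σ ^ 2 / 2 ∧ prev - δ * α ^ n * K ≤ φ n := by
    intro n h1 h2 prev hb hp1 hp2
    obtain ⟨hε0, hεle⟩ := hε n h1 h2
    have habs : |φ n| ≤ σ ^ 2 / 2 := by
      rcases le_or_gt 0 (φ n) with h | h
      · rw [abs_of_nonneg h]; linarith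
      · rw [abs_of_neg h]
        set m := -φ n with hm
        have hm0 : 0 < m := by simp only [hm]; linarith
        have hmsq : φ n ^ 2 = m ^ 2 := by rw [hm]; ring
        have hαn : α ^ n ≤ α := by
          calc α ^ n ≤ α ^ 1 := pow_le_pow_of_le_one hα0.le hα1.le h1
            _ = α := pow_one α
        have hrnn : 0 ≤ (m ^ 2) ^ ((1 : ℝ) / 3) := Real.rpow_nonneg (sq_nonneg m) _
        have h1' : m ≤ δ * α * (m ^ 2) ^ ((1 : ℝ) / 3) := by
          have hεle' : ε n ≤ δ * α ^ n * (m ^ 2) ^ ((1 : ℝ) / 3) := by rwa [hmsq] at hεle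
          have h3 : δ * α ^ n * (m ^ 2) ^ ((1 : ℝ) / 3) ≤ δ * α * (m ^ 2) ^ ((1 : ℝ) / 3) :=
            mul_le_mul_of_nonneg_right (mul_le_mul_of_nonneg_left hαn hδ.le) hrnn
          have h4 : m ≤ ε n := by
            have : ε n = prev + m := by rw [hm]; linarith
            linarith
          linarith
        have h2' : (m ^ 2) ^ ((1 : ℝ) / 3) = m ^ ((2 : ℝ) / 3) := by
          rw [← Real.rpow_natCast m 2, ← Real.rpow_mul hm0.le]
          norm_num
        have hmexp : m ^ ((1 : ℝ) / 3) * m ^ ((2 : ℝ) / 3) = m := by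
          rw [← Real.rpow_add hm0]
          norm_num
        have hp23 : 0 < m ^ ((2 : ℝ) / 3) := Real.rpow_pos_of_pos hm0 _
        have h3' : m ^ ((1 : ℝ) / 3) ≤ δ * α := by
          rw [h2'] at h1'
          nlinarith
        by_contra habs'
        push_neg at habs'
        have : (σ ^ 2 / 2) ^ ((1 : ℝ) / 3) ≤ m ^ ((1 : ℝ) / 3) :=
          Real.rpow_le_rpow (by positivity) habs'.le (by norm_num)
        linarith
    have hcube : (φ n ^ 2) ^ ((1 : ℝ) / 3) ≤ K := habs_bound _ habs
    have hεK : ε n ≤ δ * α ^ n * K := by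
      have h5 : 0 ≤ δ * α ^ n := by positivity
      nlinarith
    constructor
    · have : φ n ≤ prev := by linarith
      linarith
    · linarith
  -- main induction
  have key : ∀ n, 1 ≤ n → n ≤ N →
      σ ^ 2 / 2 - C * (∑ i ∈ Finset.range n, α ^ i) ≤ φ n ∧ φ n ≤ σ ^ 2 / 2 := by
    intro n hn
    induction n, hn using Nat.le_induction with
    | base =>
      intro h1N
      have := step 1 le_rfl h1N (σ ^ 2 / 2) hbal1 (by positivity) le_rfl
      obtain ⟨hu, hl⟩ := this
      refine ⟨?_, hu⟩
      have hsum : (∑ i ∈ Finset.range 1, α ^ i) = 1 := by simp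
      rw [hsum]
      have : C * 1 = δ * α ^ 1 * K := by rw [hCdef]; ring
      linarith
    | succ n hn ih =>
      intro hnN
      have hn' : n ≤ N := by omega
      obtain ⟨ihL, ihU⟩ := ih hn'
      have hprevpos : 0 < φ n := by
        have := hpos n
        linarith
      have hbalnn : ε (n + 1) + φ (n + 1) = φ n := by
        have := hbal (n + 1) (by omega) hnN
        simpa using this
      obtain ⟨hu, hl⟩ := step (n + 1) (by omega) hnN (φ n) hbalnn hprevpos ihU
      refine ⟨?_, hu⟩
      rw [Finset.sum_range_succ]
      have hCα : C * α ^ n = δ * α ^ (n + 1) * K := by rw [hCdef]; ring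
      have : σ ^ 2 / 2 - C * (∑ i ∈ Finset.range n, α ^ i) - C * α ^ n
          ≤ φ n - δ * α ^ (n + 1) * K := by linarith
      linarith
  intro n h1 h2
  obtain ⟨hL, _⟩ := key n h1 h2
  have hp := hpos n
  have hEq : δ * ((1 : ℝ) / 2) ^ ((2 : ℝ) / 3) * (σ ^ 2) ^ ((2 : ℝ) / 3) * α *
      (∑ i ∈ Finset.range n, α ^ i) = C * (∑ i ∈ Finset.range n, α ^ i) := by
    rw [hCdef, hKdef]; ring
  rw [hEq]
  exact ⟨hL, by linarith⟩
end
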